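/- arXiv:1204.3215 — 4 statements merged into one kernel-verified Lean document; each statement's English description precedes it below -/
import Mathlib

section
/- Let (X, B) be a Steiner quadruple system of order n ≥ 2, let (X', B') be a disjoint copy of it, and let R_1, ..., R_{n−1} and R'_1, ..., R'_{n−1} be tournament schedules (1-factorizations) on X and X' respectively. Let Y = X ∪ X' and let C consist of all blocks of B, all blocks of B', and all 4-sets {x, y, z', w'} with x, y ∈ X, z', w' ∈ X' such that for some i ∈ {1, ..., n−1} the pair {x, y} belongs to R_i and the pair {z', w'} belongs to R'_i. Then (Y, C) is a Steiner quadruple system of order 2n. -/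
/-- `(X, B)` is a Steiner quadruple system of order `v`: `X` has `v` points, every block in
`B` is a 4-element subset of `X`, and every 3-element subset of `X` is contained in exactly
one block of `B`. -/
def IsSQS {α : Type*} [DecidableEq α] (X : Finset α) (B : Finset (Finset α)) (v : ℕ) : Prop :=
  X.card = v ∧
  (∀ b ∈ B, b ⊆ X ∧ b.card = 4) ∧
  (∀ t : Finset α, t ⊆ X → t.card = 3 → ∃! b, b ∈ B ∧ t ⊆ b)

/-- The last `s` points of `l₁` equal, in order, the first `s` points of `l₂`. -/
def Overlaps {α : Type*} (s : ℕ) (l₁ l₂ : List α) : Prop :=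
  s ≤ l₁.length ∧ s ≤ l₂.length ∧ l₁.drop (l₁.length - s) = l₂.take s

/-- `Ls` is an `s`-overlap cycle for the block set `B`: a nonempty cyclic listing of
duplicate-free orderings, one for each block of `B` (each block appearing exactly once),
in which the last `s` points of each listing equal, in order, the first `s` points of the
next listing (cyclically, i.e. including the wrap-around from the last listing to the
first one). -/
def IsOCycle {α : Type*} [DecidableEq α] (s : ℕ) (B : Finset (Finset α))
    (Ls : List (List α)) : Prop :=
  Ls ≠ [] ∧
  (∀ l ∈ Ls, l.Nodup) ∧
  (Ls.map List.toFinset).Perm B.toList ∧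
  List.Chain' (Overlaps s) (Ls ++ Ls.take 1)

/-- `R` is a tournament schedule (1-factorization) on the `n`-element set `X`: the
2-element subsets of `X` are partitioned into `n - 1` rounds, each round being a perfect
matching of `X` (pairwise disjoint 2-element subsets covering `X`). -/
def IsTournamentSchedule {α : Type*} [DecidableEq α] (X : Finset α) (n : ℕ)
    (R : Fin (n - 1) → Finset (Finset α)) : Prop :=
  (∀ i, ∀ p ∈ R i, p ⊆ X ∧ p.card = 2) ∧
  (∀ i, ∀ p ∈ R i, ∀ q ∈ R i, p ≠ q → Disjoint p q) ∧
  (∀ i, ∀ x ∈ X, ∃ p ∈ R i, x ∈ p) ∧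
  (∀ p : Finset α, p ⊆ X → p.card = 2 → ∃! i, p ∈ R i)

/-!
Split a triple `t ⊆ X ∪ X'` according to how many of its points lie in `X`. If all three lie on
one side, the only block containing `t` is the one from that side's quadruple system: a mixed
block `p ∪ q` meets each side in a mere pair. If two points lie in `X`, they form a pair of
exactly one round `R i`, and the point of `X'` lies in exactly one pair `q` of `R' i`, so the
block through `t` is forced to be `(t ∩ X) ∪ q`. The construction is symmetric in the two
sides, which handles the remaining two cases.
-/

section

open Finset

theorem Finset.not_subset_of_disjoint {α : Type*} {s c X X' : Finset α} (hs : s.Nonempty)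
    (hsX : s ⊆ X) (hcX' : c ⊆ X') (h : Disjoint X X') : ¬s ⊆ c := fun hsc =>
  hs.ne_empty ((disjoint_self_iff_empty s).mp (h.mono hsX (hsc.trans hcX')))

variable {α : Type*} [DecidableEq α]

theorem Finset.union_inter_eq_left_of_disjoint {p q X X' : Finset α} (hp : p ⊆ X) (hq : q ⊆ X')
    (h : Disjoint X X') : (p ∪ q) ∩ X = p := by
  rw [union_inter_distrib_right, inter_eq_left.mpr hp,
    disjoint_iff_inter_eq_empty.mp (h.symm.mono_left hq), union_empty]

theorem Finset.union_inter_eq_right_of_disjoint {p q X X' : Finset α} (hp : p ⊆ X)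
    (hq : q ⊆ X') (h : Disjoint X X') : (p ∪ q) ∩ X' = q := by
  rw [union_comm, union_inter_eq_left_of_disjoint hq hp h.symm]

theorem Finset.card_inter_add_card_inter_of_subset_union {t X X' : Finset α} (ht : t ⊆ X ∪ X')
    (h : Disjoint X X') : (t ∩ X).card + (t ∩ X').card = t.card := by
  rw [← card_union_of_disjoint (h.mono inter_subset_right inter_subset_right),
    ← inter_union_distrib_left, inter_eq_left.mpr ht]

theorem Finset.subset_of_card_inter_eq {t X : Finset α} (h : (t ∩ X).card = t.card) : t ⊆ X :=
  inter_eq_left.mp (eq_of_subset_of_card_le inter_subset_left h.ge)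

def IsTournamentDoubling {ι : Type*} (B B' : Finset (Finset α)) (R R' : ι → Finset (Finset α))
    (C : Finset (Finset α)) : Prop :=
  ∀ c, c ∈ C ↔ c ∈ B ∨ c ∈ B' ∨ ∃ i, ∃ p ∈ R i, ∃ q ∈ R' i, c = p ∪ q

namespace IsTournamentDoubling

variable {n v v' : ℕ} {X X' : Finset α} {B B' C : Finset (Finset α)}
  {R R' : Fin (n - 1) → Finset (Finset α)}

theorem symm {ι : Type*} {R R' : ι → Finset (Finset α)}
    (hC : IsTournamentDoubling B B' R R' C) : IsTournamentDoubling B' B R' R C := by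
  intro c
  rw [hC c, or_left_comm]
  constructor <;> rintro (h | h | ⟨i, p, hp, q, hq, rfl⟩) <;>
    first
    | exact Or.inl h
    | exact Or.inr (Or.inl h)
    | exact Or.inr (Or.inr ⟨i, q, hq, p, hp, union_comm _ _⟩)

theorem subset_union_and_card_eq_four (hdisj : Disjoint X X') (hB : IsSQS X B v)
    (hB' : IsSQS X' B' v') (hR : IsTournamentSchedule X n R) (hR' : IsTournamentSchedule X' n R')
    (hC : IsTournamentDoubling B B' R R' C) : ∀ c ∈ C, c ⊆ X ∪ X' ∧ c.card = 4 := by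
  intro c hc
  rcases (hC c).1 hc with hcB | hcB' | ⟨i, p, hp, q, hq, rfl⟩
  · exact ⟨(hB.2.1 c hcB).1.trans subset_union_left, (hB.2.1 c hcB).2⟩
  · exact ⟨(hB'.2.1 c hcB').1.trans subset_union_right, (hB'.2.1 c hcB').2⟩
  · obtain ⟨hpX, hp2⟩ := hR.1 i p hp
    obtain ⟨hqX', hq2⟩ := hR'.1 i q hq
    exact ⟨union_subset_union hpX hqX', by
      rw [card_union_of_disjoint (hdisj.mono hpX hqX'), hp2, hq2]⟩

theorem existsUnique_block_of_subset_left (hdisj : Disjoint X X') (hB : IsSQS X B v)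
    (hB' : IsSQS X' B' v') (hR : IsTournamentSchedule X n R) (hR' : IsTournamentSchedule X' n R')
    (hC : IsTournamentDoubling B B' R R' C) {t : Finset α} (htX : t ⊆ X) (ht : t.card = 3) :
    ∃! c, c ∈ C ∧ t ⊆ c := by
  obtain ⟨b, ⟨hb, htb⟩, hb_unique⟩ := hB.2.2 t htX ht
  refine ⟨b, ⟨(hC b).2 (Or.inl hb), htb⟩, ?_⟩
  rintro c ⟨hc, htc⟩
  rcases (hC c).1 hc with hcB | hcB' | ⟨i, p, hp, q, hq, rfl⟩
  · exact hb_unique c ⟨hcB, htc⟩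
  · exact absurd htc
      (not_subset_of_disjoint (card_pos.mp (by omega)) htX (hB'.2.1 c hcB').1 hdisj)
  · obtain ⟨hpX, hp2⟩ := hR.1 i p hp
    have htp : t ⊆ p :=
      union_inter_eq_left_of_disjoint hpX (hR'.1 i q hq).1 hdisj ▸ subset_inter htc htX
    have := card_le_card htp
    omega

theorem existsUnique_block_of_card_inter_eq_two (hdisj : Disjoint X X') (hB : IsSQS X B v)
    (hB' : IsSQS X' B' v') (hR : IsTournamentSchedule X n R) (hR' : IsTournamentSchedule X' n R')
    (hC : IsTournamentDoubling B B' R R' C) {t : Finset α} (ht : t ⊆ X ∪ X')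
    (h2 : (t ∩ X).card = 2) (h1 : (t ∩ X').card = 1) : ∃! c, c ∈ C ∧ t ⊆ c := by
  obtain ⟨z, hz⟩ := card_eq_one.mp h1
  obtain ⟨hzt, hzX'⟩ := mem_inter.mp (hz ▸ mem_singleton_self z)
  obtain ⟨i, hi, hi_unique⟩ := hR.2.2.2 (t ∩ X) inter_subset_right h2
  obtain ⟨q, hq, hzq⟩ := hR'.2.2.1 i z hzX'
  refine ⟨t ∩ X ∪ q, ⟨(hC _).2 (Or.inr (Or.inr ⟨i, _, hi, q, hq, rfl⟩)), ?_⟩, ?_⟩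
  · calc t = t ∩ X ∪ {z} := by rw [← hz, ← inter_union_distrib_left, inter_eq_left.mpr ht]
      _ ⊆ t ∩ X ∪ q := union_subset_union_right (singleton_subset_iff.mpr hzq)
  rintro c ⟨hc, htc⟩
  rcases (hC c).1 hc with hcB | hcB' | ⟨j, p', hp', q', hq', rfl⟩
  · exact (disjoint_right.mp hdisj hzX' ((hB.2.1 c hcB).1 (htc hzt))).elim
  · exact absurd (inter_subset_left.trans htc)
      (not_subset_of_disjoint (card_pos.mp (by omega)) inter_subset_right (hB'.2.1 c hcB').1
        hdisj)
  · obtain ⟨hp'X, hp'2⟩ := hR.1 j p' hp'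
    have hq'X' := (hR'.1 j q' hq').1
    have htp' : t ∩ X ⊆ p' :=
      union_inter_eq_left_of_disjoint hp'X hq'X' hdisj ▸ inter_subset_inter_right htc
    obtain rfl : t ∩ X = p' := eq_of_subset_of_card_le htp' (by rw [hp'2, h2])
    obtain rfl : j = i := hi_unique j hp'
    have hzq' : z ∈ q' :=
      union_inter_eq_right_of_disjoint hp'X hq'X' hdisj ▸ mem_inter.mpr ⟨htc hzt, hzX'⟩
    obtain rfl : q' = q := by
      by_contra hne
      exact disjoint_left.mp (hR'.2.1 j q' hq' q hq hne) hzq' hzq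
    rfl

end IsTournamentDoubling

end

theorem sqs_tournament_doubling_general {α : Type*} [DecidableEq α] (n : ℕ)
    (X X' : Finset α) (hdisj : Disjoint X X')
    (B B' : Finset (Finset α)) (hB : IsSQS X B n) (hB' : IsSQS X' B' n)
    (R : Fin (n - 1) → Finset (Finset α)) (R' : Fin (n - 1) → Finset (Finset α))
    (hR : IsTournamentSchedule X n R) (hR' : IsTournamentSchedule X' n R')
    (C : Finset (Finset α))
    (hC : ∀ c : Finset α, c ∈ C ↔
      c ∈ B ∨ c ∈ B' ∨ ∃ i, ∃ p ∈ R i, ∃ q ∈ R' i, c = p ∪ q) :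
    IsSQS (X ∪ X') C (2 * n) := by
  have hC : IsTournamentDoubling B B' R R' C := hC
  refine ⟨by rw [Finset.card_union_of_disjoint hdisj, hB.1, hB'.1, two_mul],
    hC.subset_union_and_card_eq_four hdisj hB hB' hR hR', fun t ht ht3 => ?_⟩
  have hsplit := Finset.card_inter_add_card_inter_of_subset_union ht hdisj
  obtain h | h | h | h : (t ∩ X).card = 0 ∨ (t ∩ X).card = 1 ∨ (t ∩ X).card = 2 ∨
      (t ∩ X).card = 3 := by omega
  · exact hC.symm.existsUnique_block_of_subset_left hdisj.symm hB' hB hR' hR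
      (Finset.subset_of_card_inter_eq (by omega)) ht3
  · exact hC.symm.existsUnique_block_of_card_inter_eq_two hdisj.symm hB' hB hR' hR
      (Finset.union_comm X X' ▸ ht) (by omega) h
  · exact hC.existsUnique_block_of_card_inter_eq_two hdisj hB hB' hR hR' ht h (by omega)
  · exact hC.existsUnique_block_of_subset_left hdisj hB hB' hR hR'
      (Finset.subset_of_card_inter_eq (by omega)) ht3

/-- Tournament doubling construction: given disjoint Steiner quadruple systems `(X, B)`
and `(X', B')` of order `n ≥ 2` with tournament schedules `R` and `R'` on `X` and `X'`,
the block set consisting of `B`, `B'`, and all unions `p ∪ q` of a pair `p` of round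
`R i` with a pair `q` of round `R' i` is a Steiner quadruple system of order `2n` on
`X ∪ X'`. -/
theorem sqs_tournament_doubling {α : Type*} [DecidableEq α] (n : ℕ) (hn : 2 ≤ n)
    (X X' : Finset α) (hdisj : Disjoint X X')
    (B B' : Finset (Finset α)) (hB : IsSQS X B n) (hB' : IsSQS X' B' n)
    (R : Fin (n - 1) → Finset (Finset α)) (R' : Fin (n - 1) → Finset (Finset α))
    (hR : IsTournamentSchedule X n R) (hR' : IsTournamentSchedule X' n R')
    (C : Finset (Finset α))
    (hC : ∀ c : Finset α, c ∈ C ↔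
      c ∈ B ∨ c ∈ B' ∨ ∃ i, ∃ p ∈ R i, ∃ q ∈ R' i, c = p ∪ q) :
    IsSQS (X ∪ X') C (2 * n) :=
  sqs_tournament_doubling_general n X X' hdisj B B' hB hB' R R' hR hR' C hC
end

section
/- There exists a Steiner quadruple system of order 10 that admits a 1-overlap cycle. -/
open Finset

/-! The witness is the Steiner quadruple system of order 10 (unique up to isomorphism, with
thirty blocks), listed so that consecutive listings share their boundary point. Once the
Steiner property is phrased over `powersetCard` and the block set is taken to be the set of
supports of the listings, both properties are finite checks. -/

instance {α : Type*} [DecidableEq α] (s : ℕ) (l₁ l₂ : List α) :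
    Decidable (Overlaps s l₁ l₂) :=
  inferInstanceAs (Decidable (_ ∧ _ ∧ _))

theorem isSQS_iff {α : Type*} [DecidableEq α] {X : Finset α} {B : Finset (Finset α)} {v : ℕ} :
    IsSQS X B v ↔ #X = v ∧ (∀ b ∈ B, b ∈ X.powersetCard 4) ∧
      ∀ t ∈ X.powersetCard 3, #{b ∈ B | t ⊆ b} = 1 := by
  simp only [IsSQS, mem_powersetCard, card_eq_one_iff_existsUnique, mem_filter, and_imp]

theorem isOCycle_toFinset_iff {α : Type*} [DecidableEq α] {s : ℕ} {Ls : List (List α)} :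
    IsOCycle s (Ls.map List.toFinset).toFinset Ls ↔ Ls ≠ [] ∧ (∀ l ∈ Ls, l.Nodup) ∧
      (Ls.map List.toFinset).Nodup ∧ (Ls ++ Ls.take 1).IsChain (Overlaps s) := by
  have hperm : (Ls.map List.toFinset).Perm (Ls.map List.toFinset).toFinset.toList ↔
      (Ls.map List.toFinset).Nodup :=
    ⟨fun h => h.nodup_iff.mpr (nodup_toList _),
      fun h => (List.toFinset_toList h).symm⟩
  rw [IsOCycle, hperm]
  -- `Chain'` is a non-reducible alias of `IsChain`, which is the form carrying a `Decidable` instance.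
  rfl

def sqs10Listings : List (List ℕ) :=
  [[0, 1, 2, 3], [3, 0, 7, 5], [5, 7, 9, 4], [4, 0, 7, 8], [8, 1, 5, 7], [7, 3, 4, 6],
   [6, 0, 3, 8], [8, 3, 4, 1], [1, 2, 6, 8], [8, 0, 1, 9], [9, 2, 4, 8], [8, 0, 5, 2],
   [2, 7, 9, 0], [0, 1, 4, 5], [5, 1, 9, 2], [2, 1, 7, 4], [4, 0, 2, 6], [6, 2, 7, 5],
   [5, 1, 3, 6], [6, 1, 7, 0], [0, 6, 9, 5], [5, 2, 4, 3], [3, 2, 7, 8], [8, 3, 9, 5],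
   [5, 6, 8, 4], [4, 1, 6, 9], [9, 7, 8, 6], [6, 2, 9, 3], [3, 1, 7, 9], [9, 3, 4, 0]]

def sqs10Blocks : Finset (Finset ℕ) :=
  (sqs10Listings.map List.toFinset).toFinset

set_option maxRecDepth 10000 in
theorem isSQS_sqs10Blocks : IsSQS (range 10) sqs10Blocks 10 :=
  isSQS_iff.mpr (by decide)

theorem isOCycle_sqs10Listings : IsOCycle 1 sqs10Blocks sqs10Listings :=
  isOCycle_toFinset_iff.mpr (by decide)

/-- There exists a Steiner quadruple system of order 10 that admits a 1-overlap cycle. -/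
theorem sqs_10_one_ocycle :
    ∃ (X : Finset ℕ) (B : Finset (Finset ℕ)) (Ls : List (List ℕ)),
      IsSQS X B 10 ∧ IsOCycle 1 B Ls :=
  ⟨range 10, sqs10Blocks, sqs10Listings, isSQS_sqs10Blocks, isOCycle_sqs10Listings⟩
end

section
/- There exists a Steiner quadruple system of order 14 that admits a 1-overlap cycle. -/
/-!
The witness is an explicit cyclic listing of 91 blocks on `{0, …, 13}`, consecutive blocks
sharing their boundary point. Rather than checking all 364 triples, the Steiner property
follows from a count: 4-subsets of a 14-set that pairwise meet in at most two points share no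
triple, and 91 of them contain `4 * 91 = choose 14 3` distinct triples, hence every triple.
-/

open Finset

section SteinerSystem

variable {α : Type*} [DecidableEq α] {X : Finset α} {B : Finset (Finset α)} {k t : ℕ}

theorem eq_of_subset_of_card_inter_lt
    (hinter : (B : Set (Finset α)).Pairwise fun b b' => #(b ∩ b') < t)
    {s b b' : Finset α} (hb : b ∈ B) (hb' : b' ∈ B) (hs : #s = t) (hsb : s ⊆ b)
    (hsb' : s ⊆ b') : b = b' := by
  by_contra hne
  have := card_le_card (subset_inter hsb hsb')
  have := hinter hb hb' hne
  omega

theorem existsUnique_superset_of_card_inter_lt (hB : ∀ b ∈ B, b ⊆ X ∧ #b = k)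
    (hinter : (B : Set (Finset α)).Pairwise fun b b' => #(b ∩ b') < t)
    (hcard : #B * k.choose t = (#X).choose t) :
    ∀ s ⊆ X, #s = t → ∃! b, b ∈ B ∧ s ⊆ b := by
  have hdisj : (B : Set (Finset α)).PairwiseDisjoint (powersetCard t) := by
    intro b hb b' hb' hne
    refine disjoint_left.mpr fun s hs hs' => hne ?_
    rw [mem_powersetCard] at hs hs'
    exact eq_of_subset_of_card_inter_lt hinter hb hb' hs.2 hs.1 hs'.1
  have hcover : B.biUnion (powersetCard t) = X.powersetCard t := by
    refine eq_of_subset_of_card_le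
      (biUnion_subset.mpr fun b hb => powersetCard_mono (hB b hb).1) ?_
    rw [card_biUnion hdisj, card_powersetCard, ← hcard, card_eq_sum_ones, sum_mul]
    exact (sum_congr rfl fun b hb => by rw [card_powersetCard, (hB b hb).2, one_mul]).ge
  intro s hsX hs
  obtain ⟨b, hb, hsb⟩ := mem_biUnion.mp (hcover ▸ mem_powersetCard.mpr ⟨hsX, hs⟩)
  exact ⟨b, ⟨hb, (mem_powersetCard.mp hsb).1⟩, fun b' hb' =>
    eq_of_subset_of_card_inter_lt hinter hb'.1 hb hs hb'.2 (mem_powersetCard.mp hsb).1⟩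

end SteinerSystem

section Listing

variable {α : Type*} [DecidableEq α]

theorem List.nodup_of_pairwise_card_inter_lt {bs : List (Finset α)} {k : ℕ}
    (hcard : ∀ b ∈ bs, #b = k) (hinter : bs.Pairwise fun b b' => #(b ∩ b') < k) :
    bs.Nodup :=
  hinter.imp_of_mem fun hb _ hlt heq => by rw [heq, inter_self, hcard _ (heq ▸ hb)] at hlt; omega

theorem isSQS_toFinset {X : Finset α} {v : ℕ} {bs : List (Finset α)} (hX : #X = v)
    (hB : ∀ b ∈ bs, b ⊆ X ∧ #b = 4) (hinter : bs.Pairwise fun b b' => #(b ∩ b') ≤ 2)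
    (hnodup : bs.Nodup) (hlength : 4 * bs.length = v.choose 3) : IsSQS X bs.toFinset v := by
  have : Std.Symm fun b b' : Finset α => #(b ∩ b') < 3 := ⟨fun _ _ h => by rwa [inter_comm]⟩
  refine ⟨hX, fun b hb => hB b (List.mem_toFinset.mp hb), ?_⟩
  refine existsUnique_superset_of_card_inter_lt (k := 4)
    (fun b hb => hB b (List.mem_toFinset.mp hb)) ?_ ?_
  · rw [List.coe_toFinset]
    exact (hinter.imp Nat.lt_succ_of_le).set_pairwise
  · rw [List.card_toFinset, hnodup.dedup, hX, ← hlength, mul_comm]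
    rfl

theorem isOCycle_toFinset_map_toFinset {s : ℕ} {Ls : List (List α)} (hne : Ls ≠ [])
    (hnodup : ∀ l ∈ Ls, l.Nodup) (hblocks : (Ls.map List.toFinset).Nodup)
    (hchain : List.IsChain (Overlaps s) (Ls ++ Ls.take 1)) :
    IsOCycle s (Ls.map List.toFinset).toFinset Ls :=
  ⟨hne, hnodup, (List.toFinset_toList hblocks).symm, hchain⟩

end Listing

def sqs14Listing : List (List ℕ) :=
  [[0, 1, 11, 2], [2, 1, 8, 9], [9, 6, 10, 4], [4, 2, 9, 11], [11, 4, 10, 1], [1, 3, 5, 11],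
   [11, 3, 8, 2], [2, 11, 12, 5], [5, 0, 7, 1], [1, 7, 13, 2], [2, 7, 12, 9], [9, 0, 10, 13],
   [13, 0, 6, 7], [7, 0, 2, 10], [10, 6, 7, 12], [12, 5, 8, 1], [1, 0, 12, 13], [13, 5, 10, 1],
   [1, 2, 3, 6], [6, 4, 11, 0], [0, 3, 6, 12], [12, 7, 13, 5], [5, 3, 10, 12], [12, 1, 11, 6],
   [6, 7, 9, 8], [8, 1, 6, 13], [13, 7, 11, 4], [4, 0, 13, 5], [5, 2, 6, 10], [10, 0, 5, 11],
   [11, 2, 13, 10], [10, 7, 9, 1], [1, 3, 10, 8], [8, 7, 11, 1], [1, 11, 13, 9], [9, 5, 10, 8],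
   [8, 12, 13, 11], [11, 8, 9, 0], [0, 1, 3, 9], [9, 8, 13, 4], [4, 6, 12, 5], [5, 8, 11, 4],
   [4, 2, 3, 7], [7, 4, 9, 0], [0, 2, 5, 3], [3, 2, 12, 13], [13, 6, 11, 5], [5, 3, 4, 9],
   [9, 5, 12, 0], [0, 2, 12, 4], [4, 9, 12, 1], [1, 5, 9, 6], [6, 0, 5, 8], [8, 6, 10, 11],
   [11, 0, 13, 3], [3, 6, 7, 5], [5, 3, 8, 13], [13, 10, 12, 4], [4, 0, 1, 8], [8, 0, 13, 2],
   [2, 7, 11, 6], [6, 3, 8, 4], [4, 5, 10, 7], [7, 0, 8, 3], [3, 6, 11, 9], [9, 2, 10, 3],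
   [3, 4, 11, 12], [12, 9, 13, 6], [6, 1, 7, 4], [4, 7, 8, 12], [12, 9, 11, 10], [10, 2, 4, 8],
   [8, 2, 6, 12], [12, 1, 3, 7], [7, 2, 8, 5], [5, 1, 2, 4], [4, 0, 10, 3], [3, 9, 12, 8],
   [8, 7, 10, 13], [13, 2, 4, 6], [6, 10, 13, 3], [3, 1, 4, 13], [13, 7, 9, 3], [3, 7, 11, 10],
   [10, 0, 8, 12], [12, 1, 10, 2], [2, 9, 13, 5], [5, 7, 9, 11], [11, 7, 12, 0], [0, 1, 10, 6],
   [6, 2, 9, 0]]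

/-- There exists a Steiner quadruple system of order 14 that admits a 1-overlap cycle. -/
theorem sqs_14_one_ocycle :
    ∃ (X : Finset ℕ) (B : Finset (Finset ℕ)) (Ls : List (List ℕ)),
      IsSQS X B 14 ∧ IsOCycle 1 B Ls := by
  have hblocks : ∀ b ∈ sqs14Listing.map List.toFinset, b ⊆ range 14 ∧ #b = 4 := by
    decide +kernel
  have hinter : (sqs14Listing.map List.toFinset).Pairwise fun b b' => #(b ∩ b') ≤ 2 := by
    decide +kernel
  have hdistinct : (sqs14Listing.map List.toFinset).Nodup :=
    List.nodup_of_pairwise_card_inter_lt (fun b hb => (hblocks b hb).2)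
      (hinter.imp fun h => by omega)
  exact ⟨range 14, _, sqs14Listing,
    isSQS_toFinset (card_range 14) hblocks hinter hdistinct rfl,
    isOCycle_toFinset_map_toFinset (List.cons_ne_nil _ _) (by decide +kernel) hdistinct
      (by decide +kernel)⟩
end

section
/- For every even natural number n ≥ 2, there exists a tournament schedule on an n-element set: the set of all 2-element subsets of the set can be partitioned into n − 1 rounds, each round being a perfect matching (a set of n/2 pairwise disjoint pairs covering all n points). -/
section PartnerRounds

variable {α : Type*} [DecidableEq α] {g : α → α} {x : α}

lemma pair_eq_pair_of_mem {z : α} (hg : g (g x) = x) (hz : z ∈ ({x, g x} : Finset α)) :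
    ({x, g x} : Finset α) = {z, g z} := by
  rcases Finset.mem_insert.mp hz with rfl | hz
  · rfl
  · rw [Finset.mem_singleton.mp hz, hg, Finset.pair_comm]

lemma apply_eq_of_pair_eq {a b : α} (hg : g (g x) = x)
    (h : ({a, b} : Finset α) = {x, g x}) : g a = b := by
  have hset : ({a, b} : Set α) = {x, g x} := by rw [← Finset.coe_pair, h, Finset.coe_pair]
  rcases Set.pair_eq_pair_iff.mp hset with ⟨rfl, rfl⟩ | ⟨rfl, rfl⟩
  · rfl
  · exact hg

variable {X : Finset α} {n : ℕ}

def partnerRounds (X : Finset α) (f : Fin (n - 1) → α → α) :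
    Fin (n - 1) → Finset (Finset α) :=
  fun i => X.image fun x => {x, f i x}

lemma mem_partnerRounds {f : Fin (n - 1) → α → α} {i : Fin (n - 1)} {p : Finset α} :
    p ∈ partnerRounds X f i ↔ ∃ x ∈ X, {x, f i x} = p :=
  Finset.mem_image

theorem isTournamentSchedule_partnerRounds (f : Fin (n - 1) → α → α)
    (hmaps : ∀ i, ∀ x ∈ X, f i x ∈ X) (hne : ∀ i, ∀ x ∈ X, f i x ≠ x)
    (hinv : ∀ i, ∀ x ∈ X, f i (f i x) = x)
    (huniq : ∀ a ∈ X, ∀ b ∈ X, a ≠ b → ∃! i, f i a = b) :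
    IsTournamentSchedule X n (partnerRounds X f) := by
  refine ⟨?_, ?_, ?_, ?_⟩
  · rintro i p hp
    obtain ⟨x, hx, rfl⟩ := mem_partnerRounds.mp hp
    exact ⟨Finset.insert_subset hx (Finset.singleton_subset_iff.mpr (hmaps i x hx)),
      Finset.card_pair (hne i x hx).symm⟩
  · rintro i p hp q hq hpq
    obtain ⟨x, hx, rfl⟩ := mem_partnerRounds.mp hp
    obtain ⟨y, hy, rfl⟩ := mem_partnerRounds.mp hq
    refine Finset.disjoint_left.mpr fun z hzx hzy => hpq ?_
    rw [pair_eq_pair_of_mem (hinv i x hx) hzx, pair_eq_pair_of_mem (hinv i y hy) hzy]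
  · intro i x hx
    exact ⟨{x, f i x}, mem_partnerRounds.mpr ⟨x, hx, rfl⟩, Finset.mem_insert_self x _⟩
  · intro p hpX hp
    obtain ⟨a, b, hab, rfl⟩ := Finset.card_eq_two.mp hp
    have ha : a ∈ X := hpX (Finset.mem_insert_self a {b})
    have hb : b ∈ X := hpX (Finset.mem_insert_of_mem (Finset.mem_singleton_self b))
    refine (existsUnique_congr fun i => ?_).mp (huniq a ha b hb hab)
    refine ⟨fun h => mem_partnerRounds.mpr ⟨a, ha, h ▸ rfl⟩, fun h => ?_⟩
    obtain ⟨x, hx, hpx⟩ := mem_partnerRounds.mp h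
    exact apply_eq_of_pair_eq (hinv i x hx) hpx.symm

end PartnerRounds

namespace ZMod

lemma isUnit_two_of_odd {m : ℕ} (hm : Odd m) : IsUnit (2 : ZMod m) := by
  exact_mod_cast (isUnit_iff_coprime 2 m).mpr (Nat.coprime_two_left.mpr hm)

lemma natCast_inj_of_lt {m a b : ℕ} (ha : a < m) (hb : b < m) (h : (a : ZMod m) = b) : a = b := by
  rwa [natCast_eq_natCast_iff', Nat.mod_eq_of_lt ha, Nat.mod_eq_of_lt hb] at h

lemma existsUnique_fin_natCast_eq {m : ℕ} [NeZero m] (c : ZMod m) :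
    ∃! j : Fin m, ((j : ℕ) : ZMod m) = c :=
  ⟨⟨c.val, c.val_lt⟩, natCast_zmod_val c,
    fun j hj => Fin.ext (natCast_inj_of_lt j.isLt c.val_lt (by rw [hj, natCast_zmod_val]))⟩

end ZMod

/-- The points `x < m` stand for the elements of `ZMod m`; `m` is the centre of the circle. -/
def circlePartner (m i x : ℕ) : ℕ :=
  if x = m then i else if x = i then m else (2 * (i : ZMod m) - x).val

section CirclePartner

variable {m : ℕ} (i : Fin m) {x y : ℕ}

lemma circlePartner_pivot : circlePartner m i m = i := if_pos rfl

lemma circlePartner_le : circlePartner m i x ≤ m := by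
  have : NeZero m := NeZero.of_pos i.pos
  unfold circlePartner
  split_ifs
  · exact i.isLt.le
  · exact le_rfl
  · exact (ZMod.val_lt _).le

lemma circlePartner_eq_pivot_iff (hx : x < m) : circlePartner m i x = m ↔ x = i := by
  have : NeZero m := NeZero.of_pos i.pos
  unfold circlePartner
  split_ifs with hxm hxi
  · omega
  · simpa using hxi
  · exact iff_of_false (ZMod.val_lt _).ne hxi

lemma circlePartner_eq_iff (hm : Odd m) (hx : x < m) (hy : y < m) :
    circlePartner m i x = y ↔ x ≠ y ∧ (x + y : ZMod m) = 2 * i := by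
  have : NeZero m := NeZero.of_pos i.pos
  by_cases hxi : x = i
  · subst hxi
    refine iff_of_false (fun h => ?_) fun ⟨hxy, h⟩ => hxy ?_
    · rw [(circlePartner_eq_pivot_iff i hx).mpr rfl] at h
      omega
    · exact ZMod.natCast_inj_of_lt hx hy (add_left_cancel (h.trans (two_mul _))).symm
  · have hpartner : circlePartner m i x = (2 * (i : ZMod m) - x).val := by
      simp [circlePartner, hx.ne, hxi]
    have hsum : (x + y : ZMod m) = 2 * i ↔ 2 * (i : ZMod m) - x = y := by
      rw [sub_eq_iff_eq_add', eq_comm]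
    rw [hpartner, hsum]
    constructor
    · rintro rfl
      refine ⟨fun hxy => hxi (ZMod.natCast_inj_of_lt hx i.isLt ?_),
        (ZMod.natCast_zmod_val _).symm⟩
      have hx2 : (x : ZMod m) = 2 * i - x := (congrArg Nat.cast hxy).trans (ZMod.natCast_zmod_val _)
      refine (ZMod.isUnit_two_of_odd hm).mul_left_cancel ?_
      linear_combination hx2
    · rintro ⟨-, h⟩
      rw [h, ZMod.val_cast_of_lt hy]

lemma circlePartner_ne_self (hm : Odd m) (hx : x ≤ m) : circlePartner m i x ≠ x := by
  rcases hx.lt_or_eq with hx | rfl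
  · exact fun h => ((circlePartner_eq_iff i hm hx hx).mp h).1 rfl
  · rw [circlePartner_pivot]
    exact i.isLt.ne

lemma circlePartner_circlePartner (hm : Odd m) (hx : x ≤ m) :
    circlePartner m i (circlePartner m i x) = x := by
  rcases hx.lt_or_eq with hx | rfl
  · by_cases hxi : x = i
    · rw [(circlePartner_eq_pivot_iff i hx).mpr hxi, circlePartner_pivot, hxi]
    · have hy : circlePartner m i x < m :=
        (circlePartner_le i).lt_of_ne (mt (circlePartner_eq_pivot_iff i hx).mp hxi)
      obtain ⟨hxy, hsum⟩ := (circlePartner_eq_iff i hm hx hy).mp rfl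
      exact (circlePartner_eq_iff i hm hy hx).mpr ⟨Ne.symm hxy, by rwa [add_comm]⟩
  · rw [circlePartner_pivot, (circlePartner_eq_pivot_iff i i.isLt).mpr rfl]

end CirclePartner

lemma existsUnique_circlePartner_eq {m a b : ℕ} (hm : Odd m) (ha : a ≤ m) (hb : b ≤ m)
    (hab : a ≠ b) : ∃! i : Fin m, circlePartner m i a = b := by
  have : NeZero m := ⟨hm.pos.ne'⟩
  rcases ha.lt_or_eq with ha | rfl
  · rcases hb.lt_or_eq with hb | rfl
    · obtain ⟨u, hu⟩ := ZMod.isUnit_two_of_odd hm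
      refine (existsUnique_congr fun i => ?_).mp
        (ZMod.existsUnique_fin_natCast_eq (((u⁻¹ : (ZMod m)ˣ) : ZMod m) * (a + b : ZMod m)))
      rw [circlePartner_eq_iff i hm ha hb, Units.eq_inv_mul_iff_mul_eq, hu, eq_comm]
      exact (and_iff_right hab).symm
    · exact ⟨⟨a, ha⟩, (circlePartner_eq_pivot_iff _ ha).mpr rfl,
        fun j hj => Fin.ext ((circlePartner_eq_pivot_iff j ha).mp hj).symm⟩
  · exact ⟨⟨b, hb.lt_of_ne hab.symm⟩, circlePartner_pivot _,
      fun j hj => Fin.ext ((circlePartner_pivot j).symm.trans hj)⟩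

/-- For every even `n ≥ 2` there is a tournament schedule on an `n`-element set: the
2-element subsets can be partitioned into `n - 1` perfect matchings. -/
theorem tournament_schedule_exists (n : ℕ) (hn : 2 ≤ n) (heven : n % 2 = 0) :
    ∃ R : Fin (n - 1) → Finset (Finset ℕ),
      IsTournamentSchedule (Finset.range n) n R := by
  have hodd : Odd (n - 1) := Nat.odd_iff.mpr (by omega)
  have hmem : ∀ {x}, x ∈ Finset.range n ↔ x ≤ n - 1 := by
    intro x
    rw [Finset.mem_range]
    omega
  refine ⟨_, isTournamentSchedule_partnerRounds (fun i x => circlePartner (n - 1) i x)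
    ?_ ?_ ?_ ?_⟩
  · exact fun i _ _ => hmem.mpr (circlePartner_le i)
  · exact fun i _ hx => circlePartner_ne_self i hodd (hmem.mp hx)
  · exact fun i _ hx => circlePartner_circlePartner i hodd (hmem.mp hx)
  · exact fun _ ha _ hb hab => existsUnique_circlePartner_eq hodd (hmem.mp ha) (hmem.mp hb) hab
end
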